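/- Let G be a cubic graph of order at least 12 having a 2-factor F. Then for every set B ⊆ E(F) of type II, the graph G^2[B] contains no connected component isomorphic to the complete graph K_5. -/

import Mathlib

open SimpleGraph

lemma sym2_eq_of_two_mem' {V : Type*} {e : Sym2 V} {x y : V}
    (hx : x ∈ e) (hy : y ∈ e) (hxy : x ≠ y) : e = s(x, y) := by
  induction e with
  | _ a b =>
    rw [Sym2.mem_iff] at hx hy
    rcases hx with rfl | rfl <;> rcases hy with rfl | rfl
    · exact absurd rfl hxy
    · rfl
    · rw [Sym2.eq_swap]
    · exact absurd rfl hxy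

lemma middle_of_edist_le_two' {V : Type*} {G : SimpleGraph V} (e f : G.edgeSet)
    (hne : e ≠ f)
    (hdisj : ∀ v : V, ¬(v ∈ (e : Sym2 V) ∧ v ∈ (f : Sym2 V)))
    (hd : G.lineGraph.edist e f ≤ 2) :
    ∃ h : G.edgeSet, G.lineGraph.Adj e h ∧ G.lineGraph.Adj h f := by
  have htop : G.lineGraph.edist e f ≠ ⊤ := by
    intro h; rw [h] at hd; exact absurd hd (by norm_num)
  obtain ⟨p, hp⟩ := SimpleGraph.exists_walk_of_edist_ne_top htop
  have hlen : p.length ≤ 2 := by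
    have : (p.length : ℕ∞) ≤ 2 := by rw [hp]; exact hd
    exact_mod_cast this
  have h0 : p.length ≠ 0 := fun h => hne (SimpleGraph.Walk.eq_of_length_eq_zero h)
  have h1 : p.length ≠ 1 := by
    intro h
    have hadj : G.lineGraph.Adj e f := by
      have := p.adj_getVert_succ (i := 0) (by omega)
      rwa [p.getVert_zero, show (0 + 1 : ℕ) = p.length by omega, p.getVert_length] at this
    obtain ⟨-, v, hv1, hv2⟩ := SimpleGraph.lineGraph_adj_iff_exists.mp hadj
    exact hdisj v ⟨hv1, hv2⟩
  have h2 : p.length = 2 := by omega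
  refine ⟨p.getVert 1, ?_, ?_⟩
  · have := p.adj_getVert_succ (i := 0) (by omega)
    rwa [p.getVert_zero] at this
  · have := p.adj_getVert_succ (i := 1) (by omega)
    rwa [show (1 + 1 : ℕ) = p.length by omega, p.getVert_length] at this

variable {V : Type*}

/-- A graph is cubic if every vertex has exactly 3 neighbors. -/
def IsCubicGraph (G : SimpleGraph V) : Prop := ∀ v, (G.neighborSet v).ncard = 3

/-- A 2-factor: a spanning subgraph in which every vertex has exactly 2 neighbors. -/
def IsTwoFactor {G : SimpleGraph V} (F : G.Subgraph) : Prop :=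
  F.IsSpanning ∧ ∀ v, (F.neighborSet v).ncard = 2

/-- An `S`-packing edge-coloring of `G`, where the sequence `S` is given as a list `L`
of natural numbers: a partition (given by a coloring function) of the edges into
`L.length` classes, where two distinct edges in class `i` are at distance at least
`L.get i + 1` in the line graph of `G`. -/
def HasPackingEdgeColoring (G : SimpleGraph V) (L : List ℕ) : Prop :=
  ∃ c : G.edgeSet → Fin L.length,
    ∀ e f : G.edgeSet, e ≠ f → c e = c f →
      (L.get (c e) : ℕ∞) + 1 ≤ G.lineGraph.edist e f

/-- The graph `G^k[A]`: vertices are the elements of `A` (a set of edges of `G`), two of them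
being adjacent iff the corresponding edges are distinct and at distance at most `k` in `G`. -/
noncomputable def distPowerGraph (G : SimpleGraph V) (k : ℕ) (A : Set (Sym2 V)) :
    SimpleGraph A where
  Adj e f := e ≠ f ∧ ∃ (he : (e : Sym2 V) ∈ G.edgeSet) (hf : (f : Sym2 V) ∈ G.edgeSet),
      G.lineGraph.edist ⟨e, he⟩ ⟨f, hf⟩ ≤ k
  symm := by
    refine ⟨?_⟩
    rintro e f ⟨hne, he, hf, hd⟩
    exact ⟨hne.symm, hf, he, by rwa [SimpleGraph.edist_comm]⟩
  loopless := by refine ⟨?_⟩; rintro e ⟨hne, -⟩; exact hne rfl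

/-- The set of odd cycles of a 2-factor `F`, viewed as the connected components
of its spanning coercion with an odd number of vertices. -/
def oddCycles {G : SimpleGraph V} (F : G.Subgraph) :
    Set F.spanningCoe.ConnectedComponent :=
  {c | Odd c.supp.ncard}

/-- The set of edges of a 2-factor `F` lying on the cycle (connected component) `c`. -/
def cycleEdges {G : SimpleGraph V} (F : G.Subgraph)
    (c : F.spanningCoe.ConnectedComponent) : Set (Sym2 V) :=
  {e ∈ F.edgeSet | ∀ v ∈ e, v ∈ c.supp}

/-- A set `A` of edges of a 2-factor `F` is of type I if it contains exactly one edge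
per odd cycle of `F` and no edge of any even cycle of `F`. -/
def IsTypeI {G : SimpleGraph V} (F : G.Subgraph) (A : Set (Sym2 V)) : Prop :=
  A ⊆ F.edgeSet ∧ ∀ c : F.spanningCoe.ConnectedComponent,
    (Odd c.supp.ncard → (A ∩ cycleEdges F c).ncard = 1) ∧
    (¬ Odd c.supp.ncard → A ∩ cycleEdges F c = ∅)

/-- A set `B` of edges of a 2-factor `F` is of type II if no two of its edges are adjacent
in `G` and it contains exactly `⌊n/2⌋` edges of every cycle of `F` of length `n`. -/
def IsTypeII {G : SimpleGraph V} (F : G.Subgraph) (B : Set (Sym2 V)) : Prop :=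
  B ⊆ F.edgeSet ∧
  (∀ e ∈ B, ∀ f ∈ B, e ≠ f → ∀ v : V, ¬(v ∈ e ∧ v ∈ f)) ∧
  ∀ c : F.spanningCoe.ConnectedComponent,
    (B ∩ cycleEdges F c).ncard = c.supp.ncard / 2


/-- In a cubic graph `G` of order at least 12 with a 2-factor `F`, for every set `B ⊆ E(F)`
of type II, no connected component of `G²[B]` is isomorphic to `K₅`. -/
theorem statement_12 {V : Type*} [Fintype V] (G : SimpleGraph V)
    (hconn : G.Connected) (hcubic : IsCubicGraph G)
    (hcard : 12 ≤ Fintype.card V)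
    (F : G.Subgraph) (hF : IsTwoFactor F)
    (B : Set (Sym2 V)) (hB : IsTypeII F B) :
    ∀ c : (distPowerGraph G 2 B).ConnectedComponent,
      ¬ Nonempty (((distPowerGraph G 2 B).induce c.supp) ≃g (⊤ : SimpleGraph (Fin 5))) := by
  classical
  rintro c ⟨iso⟩
  let e : Fin 5 → B := fun i => (iso.symm i : c.supp).1
  have hadj : ∀ i j : Fin 5, i ≠ j → (distPowerGraph G 2 B).Adj (e i) (e j) := by
    intro i j hij
    have h2 : (⊤ : SimpleGraph (Fin 5)).Adj (iso (iso.symm i)) (iso (iso.symm j)) := by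
      simp [hij]
    exact iso.map_rel_iff.mp h2
  have hB1 : B ⊆ G.edgeSet := fun x hx => F.edgeSet_subset (hB.1 hx)
  have heG : ∀ i, ((e i : Sym2 V)) ∈ G.edgeSet := fun i => hB1 (e i).2
  have hne : ∀ i j : Fin 5, i ≠ j → (e i : Sym2 V) ≠ (e j : Sym2 V) := by
    intro i j hij h
    exact (hadj i j hij).1 (Subtype.ext h)
  have hdisj : ∀ i j : Fin 5, i ≠ j → ∀ v : V,
      ¬(v ∈ (e i : Sym2 V) ∧ v ∈ (e j : Sym2 V)) :=
    fun i j hij => hB.2.1 _ (e i).2 _ (e j).2 (hne i j hij)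
  -- middle edges
  have hmid : ∀ i j : Fin 5, i ≠ j → ∃ h : Sym2 V, h ∈ G.edgeSet ∧
      h ≠ (e i : Sym2 V) ∧ h ≠ (e j : Sym2 V) ∧
      (∃ a, a ∈ h ∧ a ∈ (e i : Sym2 V)) ∧ (∃ b, b ∈ h ∧ b ∈ (e j : Sym2 V)) := by
    intro i j hij
    obtain ⟨hne', he', hf', hd⟩ := hadj i j hij
    have hne2 : (⟨(e i : Sym2 V), he'⟩ : G.edgeSet) ≠ ⟨(e j : Sym2 V), hf'⟩ :=
      fun h => hne i j hij (Subtype.mk_eq_mk.mp h)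
    obtain ⟨h, hadj1, hadj2⟩ := middle_of_edist_le_two' _ _ hne2 (hdisj i j hij) hd
    obtain ⟨hne3, a, ha1, ha2⟩ := SimpleGraph.lineGraph_adj_iff_exists.mp hadj1
    obtain ⟨hne4, b, hb1, hb2⟩ := SimpleGraph.lineGraph_adj_iff_exists.mp hadj2
    exact ⟨h.1, h.2, fun hh => hne3 (Subtype.ext hh.symm), fun hh => hne4 (Subtype.ext hh),
      ⟨a, ha2, ha1⟩, ⟨b, hb1, hb2⟩⟩
  choose m hmG hmi hmj hma hmb using hmid
  -- the vertex set covered by the five edges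
  set U : Set V := {x | ∃ i, x ∈ (e i : Sym2 V)} with hU
  -- closure of U under adjacency
  have hclosed : ∀ x ∈ U, ∀ y, G.Adj x y → y ∈ U := by
    rintro x ⟨i, hx⟩ y hxy
    obtain ⟨v, hv⟩ := Sym2.mem_iff_exists.mp hx
    by_cases hyv : y = v
    · exact ⟨i, by rw [hv, hyv]; exact Sym2.mem_mk_right x v⟩
    -- the set of edges incident to e i, other than e i
    set Ei : Set (Sym2 V) := {h | h ∈ G.edgeSet ∧ h ≠ (e i : Sym2 V) ∧
      ∃ w, w ∈ h ∧ w ∈ (e i : Sym2 V)} with hEi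
    have hAdjxv : G.Adj x v := by
      have := heG i; rw [hv] at this; exact this
    -- Ei has at most 4 elements
    have hEicard : Ei.ncard ≤ 4 := by
      have hsub : Ei ⊆ (fun z => s(x, z)) '' (G.neighborSet x \ {v}) ∪
          (fun z => s(v, z)) '' (G.neighborSet v \ {x}) := by
        rintro h ⟨hhG, hhne, w, hwh, hwe⟩
        rw [hv, Sym2.mem_iff] at hwe
        obtain ⟨z, hz⟩ := Sym2.mem_iff_exists.mp hwh
        rcases hwe with rfl | rfl
        · left
          refine ⟨z, ⟨?_, ?_⟩, hz.symm⟩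
          · rw [hz] at hhG; exact hhG
          · intro hzv; rw [Set.mem_singleton_iff] at hzv
            exact hhne (by rw [hz, hzv, hv])
        · right
          refine ⟨z, ⟨?_, ?_⟩, hz.symm⟩
          · rw [hz] at hhG; exact hhG
          · intro hzx; rw [Set.mem_singleton_iff] at hzx
            refine hhne ?_
            rw [hz, hzx, hv, Sym2.eq_swap]
      refine (Set.ncard_le_ncard hsub (Set.toFinite _)).trans
        ((Set.ncard_union_le _ _).trans ?_)
      have h1 : ((fun z => s(x, z)) '' (G.neighborSet x \ {v})).ncard ≤ 2 := by
        refine (Set.ncard_image_le (Set.toFinite _)).trans ?_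
        rw [Set.ncard_diff_singleton_of_mem (show v ∈ G.neighborSet x from hAdjxv), hcubic x]
      have h2 : ((fun z => s(v, z)) '' (G.neighborSet v \ {x})).ncard ≤ 2 := by
        refine (Set.ncard_image_le (Set.toFinite _)).trans ?_
        rw [Set.ncard_diff_singleton_of_mem (show x ∈ G.neighborSet v from hAdjxv.symm), hcubic v]
      omega
    -- the map from other indices to middle edges
    set g : Fin 5 → Sym2 V := fun j => if hj : j = i then (e i : Sym2 V) else m i j (Ne.symm hj)
      with hg
    set Js : Set (Fin 5) := {j | j ≠ i} with hJs
    have hgmem : g '' Js ⊆ Ei := by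
      rintro h ⟨j, hj, rfl⟩
      have hj' : j ≠ i := hj
      rw [hg]; simp only [dif_neg hj']
      exact ⟨hmG i j (Ne.symm hj'), hmi i j (Ne.symm hj'), hma i j (Ne.symm hj')⟩
    have hginj : Set.InjOn g Js := by
      intro j hj j' hj' hgg
      by_contra hne'
      have hj2 : j ≠ i := hj
      have hj2' : j' ≠ i := hj'
      rw [hg] at hgg; simp only [dif_neg hj2, dif_neg hj2'] at hgg
      obtain ⟨a, ha1, ha2⟩ := hma i j (Ne.symm hj2)
      obtain ⟨b, hb1, hb2⟩ := hmb i j (Ne.symm hj2)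
      obtain ⟨b', hb1', hb2'⟩ := hmb i j' (Ne.symm hj2')
      have hab : a ≠ b := fun h => hdisj i j (Ne.symm hj2) a ⟨ha2, h ▸ hb2⟩
      have hmeq : m i j (Ne.symm hj2) = s(a, b) := sym2_eq_of_two_mem' ha1 hb1 hab
      rw [← hgg, hmeq, Sym2.mem_iff] at hb1'
      rcases hb1' with rfl | rfl
      · exact hdisj i j' (Ne.symm hj2') b' ⟨ha2, hb2'⟩
      · exact hdisj j j' hne' b' ⟨hb2, hb2'⟩
    have hJscard : Js.ncard = 4 := by
      have : Js = Set.univ \ {i} := by ext j; simp [hJs]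
      rw [this, Set.ncard_diff_singleton_of_mem (Set.mem_univ i),
        Set.ncard_univ, Nat.card_eq_fintype_card, Fintype.card_fin]
    have hEiEq : g '' Js = Ei := by
      refine Set.eq_of_subset_of_ncard_le hgmem ?_ (Set.toFinite _)
      rw [Set.ncard_image_of_injOn hginj, hJscard]; exact hEicard
    -- the edge s(x,y) is in Ei
    have hxyEi : s(x, y) ∈ Ei := by
      refine ⟨hxy, fun h => ?_, x, Sym2.mem_mk_left x y, hx⟩
      rw [hv, Sym2.eq_iff] at h
      rcases h with ⟨-, rfl⟩ | ⟨rfl, rfl⟩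
      · exact hyv rfl
      · exact G.ne_of_adj hxy rfl
    rw [← hEiEq] at hxyEi
    obtain ⟨j, hj, hgj⟩ := hxyEi
    have hj' : j ≠ i := hj
    rw [hg] at hgj; simp only [dif_neg hj'] at hgj
    obtain ⟨b, hb1, hb2⟩ := hmb i j (Ne.symm hj')
    rw [hgj, Sym2.mem_iff] at hb1
    rcases hb1 with rfl | rfl
    · exact absurd ⟨hx, hb2⟩ (hdisj i j (Ne.symm hj') b)
    · exact ⟨j, hb2⟩
  -- U absorbs walks
  have hwalk : ∀ x z : V, ∀ _ : G.Walk x z, x ∈ U → z ∈ U := by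
    intro x z p
    induction p with
    | nil => exact id
    | cons h q ih => intro hx; exact ih (hclosed _ hx _ h)
  -- a starting point
  have hrepr : ∀ z : Sym2 V, ∃ a b : V, z = s(a, b) := fun z =>
    z.inductionOn fun a b => ⟨a, b, rfl⟩
  obtain ⟨a0, b0, hrep⟩ := hrepr (e 0 : Sym2 V)
  have hx0 : a0 ∈ U := ⟨0, by rw [hrep]; exact Sym2.mem_mk_left a0 b0⟩
  have hUall : ∀ z : V, z ∈ U := fun z => hwalk a0 z (hconn a0 z).some hx0
  -- extract endpoints of all five edges
  choose av bv hav using fun i : Fin 5 => hrepr (e i : Sym2 V)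
  -- the finite covering set
  have hcover : (Finset.univ : Finset V) ⊆
      {av 0, bv 0, av 1, bv 1, av 2, bv 2, av 3, bv 3, av 4, bv 4} := by
    intro z _
    obtain ⟨i, hz⟩ := hUall z
    rw [hav i, Sym2.mem_iff] at hz
    rcases hz with rfl | rfl <;> fin_cases i <;> simp
  have hcard10 : Fintype.card V ≤ 10 := by
    have h1 := Finset.card_le_card hcover
    rw [Finset.card_univ] at h1
    refine h1.trans ?_
    refine le_trans (Finset.card_insert_le _ _) (Nat.add_le_add_right ?_ 1)
    refine le_trans (Finset.card_insert_le _ _) (Nat.add_le_add_right ?_ 1)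
    refine le_trans (Finset.card_insert_le _ _) (Nat.add_le_add_right ?_ 1)
    refine le_trans (Finset.card_insert_le _ _) (Nat.add_le_add_right ?_ 1)
    refine le_trans (Finset.card_insert_le _ _) (Nat.add_le_add_right ?_ 1)
    refine le_trans (Finset.card_insert_le _ _) (Nat.add_le_add_right ?_ 1)
    refine le_trans (Finset.card_insert_le _ _) (Nat.add_le_add_right ?_ 1)
    refine le_trans (Finset.card_insert_le _ _) (Nat.add_le_add_right ?_ 1)
    refine le_trans (Finset.card_insert_le _ _) (Nat.add_le_add_right ?_ 1)
    simp [Finset.card_singleton]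
  omega
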